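/- Let 0 ≤ β ≤ α ≤ 1 and 0 ≤ β' ≤ α' ≤ 1, and let s ∈ ℝ. Define the weight w^s on I^(α,β) by w_i^s = 2^{js} for i = (j,m,ℓ) ∈ I₀^(α,β) and w₀^s = 1. Then for all i ∈ I^(α,β) and i' ∈ I^(α',β') with Q_i^(α,β) ∩ Q_{i'}^(α',β') ≠ ∅ one has 2^{−4|s|}·w_{i'}^s ≤ w_i^s ≤ 2^{4|s|}·w_{i'}^s; moreover |det T_i^(α,β)| = w_i^{α+β}, so that 2^{−4(α+β)}·w_{i'}^{α+β} ≤ |det T_i^(α,β)| ≤ 2^{4(α+β)}·w_{i'}^{α+β} for such i, i'. -/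

import Mathlib

/-!
A rotation is an isometry and the first coordinate of `A_j q + c_{j,m}` lies between
`2^j/4` and `4·2^j` (the shift `2^{j-1}` dominates, and `m·2^{αj} ≤ 2^{j-1} + 2^{αj}` by the
choice of `m_j^max`), so every `Q_{j,m,ℓ}` lies in the annulus `2^j/4 ≤ |ξ| ≤ 4·2^j`, while
`Q₀ = B₄(0)` lies in the ball of radius `4·2^0`. Hence intersecting sets have scales `j, j'`
with `|j - j'| ≤ 4`, and the weights `2^{js}` differ by a factor of at most `2^{4|s|}`. Since
rotations have determinant `1`, `|det T_{j,m,ℓ}| = 2^{αj}·2^{βj} = w^{α+β}_{j,m,ℓ}`.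
-/

noncomputable section

open Real Set MeasureTheory Pointwise
open scoped ENNReal

/-- `ℝ²` with the Euclidean norm. -/
abbrev R2 : Type := EuclideanSpace ℝ (Fin 2)

/-- The vector `(a, b) ∈ ℝ²`. -/
def vec2 (a b : ℝ) : R2 := (EuclideanSpace.equiv (Fin 2) ℝ).symm ![a, b]

/-- Action of a `2×2` matrix on `ℝ²`. -/
def mulV (M : Matrix (Fin 2) (Fin 2) ℝ) (x : R2) : R2 :=
  (EuclideanSpace.equiv (Fin 2) ℝ).symm (M.mulVec ((EuclideanSpace.equiv (Fin 2) ℝ) x))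

/-- Rotation matrix through the angle `θ`. -/
def Rmat (θ : ℝ) : Matrix (Fin 2) (Fin 2) ℝ :=
  !![Real.cos θ, -Real.sin θ; Real.sin θ, Real.cos θ]

/-- The diagonal matrix `A_j = diag(2^{αj}, 2^{βj})`. -/
def Amat (α β : ℝ) (j : ℕ) : Matrix (Fin 2) (Fin 2) ℝ :=
  !![(2:ℝ) ^ (α * (j:ℝ)), 0; 0, (2:ℝ) ^ (β * (j:ℝ))]

/-- The angle `Θ_{j,ℓ} = 2ℓ·(π/N)·2^{(β − 1)j}`, with `N = 10`. -/
def Theta (β : ℝ) (j ℓ : ℕ) : ℝ :=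
  2 * (ℓ:ℝ) * (Real.pi / 10) * (2:ℝ) ^ ((β - 1) * (j:ℝ))

/-- The translation `c_{j,m} = (2^{j−1} + m·2^{αj}, 0)ᵗ`. -/
def cvec (α : ℝ) (j m : ℕ) : R2 :=
  vec2 ((2:ℝ) ^ ((j:ℝ) - 1) + (m:ℝ) * (2:ℝ) ^ (α * (j:ℝ))) 0

/-- The base set `Q = (−ε, 1+ε) × (−1−ε, 1+ε)`. -/
def baseQ (ε : ℝ) : Set R2 :=
  {x : R2 | x 0 ∈ Set.Ioo (-ε) (1+ε) ∧ x 1 ∈ Set.Ioo (-1-ε) (1+ε)}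

/-- `m_j^max = ⌈2^{(1−α)j−1}⌉`. -/
def mjmax (α : ℝ) (j : ℕ) : ℤ := ⌈(2:ℝ) ^ ((1-α) * (j:ℝ) - 1)⌉

/-- `ℓ_j^max = ⌈N·2^{(1−β)j}⌉`, with `N = 10`. -/
def ljmax (β : ℝ) (j : ℕ) : ℤ := ⌈(10:ℝ) * (2:ℝ) ^ ((1-β) * (j:ℝ))⌉

/-- Membership of a triple `(j,m,ℓ)` in the index set
`I₀ = {(j,m,ℓ) ∈ ℕ × ℕ₀ × ℕ₀ : m ≤ m_j^max, ℓ ≤ ℓ_j^max}` (with `ℕ = {1,2,…}`). -/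
def memI0 (α β : ℝ) (i : ℕ × ℕ × ℕ) : Prop :=
  1 ≤ i.1 ∧ (i.2.1 : ℤ) ≤ mjmax α i.1 ∧ (i.2.2 : ℤ) ≤ ljmax β i.1

/-- The set `Q_{j,m,ℓ} = R_{j,ℓ}(A_j·Q + c_{j,m})`. -/
def Qset (α β ε : ℝ) (j m ℓ : ℕ) : Set R2 :=
  (fun x => mulV (Rmat (Theta β j ℓ)) (mulV (Amat α β j) x + cvec α j m)) '' baseQ ε

/-- The index set `I = {0} ∪ I₀`: `none` plays the role of the index `0`. -/
abbrev Idx : Type := Option (ℕ × ℕ × ℕ)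

/-- Membership in `I = {0} ∪ I₀`. -/
def memI (α β : ℝ) : Idx → Prop
  | none => True
  | some i => memI0 α β i

/-- The family `(Q_i)_{i ∈ I}`, where `Q₀ = B₄(0)` is the open Euclidean ball of
radius `4` about the origin. -/
def QsetI (α β ε : ℝ) : Idx → Set R2
  | none => Metric.ball (0:R2) 4
  | some (j, m, ℓ) => Qset α β ε j m ℓ

/-- The invertible matrices `T_i`: `T_{j,m,ℓ} = R_{j,ℓ}·A_j` for `(j,m,ℓ) ∈ I₀` and
`T₀ = id`. -/
def Tmat (α β : ℝ) : Idx → Matrix (Fin 2) (Fin 2) ℝ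
  | none => 1
  | some (j, _, ℓ) => Rmat (Theta β j ℓ) * Amat α β j

/-- The weight `w^s` on `I`: `w_i^s = 2^{js}` for `i = (j,m,ℓ) ∈ I₀` and `w₀^s = 1`. -/
def wI (s : ℝ) : Idx → ℝ
  | none => 1
  | some i => (2:ℝ) ^ ((i.1:ℝ) * s)

lemma mulV_apply_zero (M : Matrix (Fin 2) (Fin 2) ℝ) (x : R2) :
    mulV M x 0 = M 0 0 * x 0 + M 0 1 * x 1 := by
  simp [mulV, Matrix.mulVec_eq_sum, mul_comm]

lemma mulV_apply_one (M : Matrix (Fin 2) (Fin 2) ℝ) (x : R2) :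
    mulV M x 1 = M 1 0 * x 0 + M 1 1 * x 1 := by
  simp [mulV, Matrix.mulVec_eq_sum, mul_comm]

lemma norm_R2_eq_sqrt (x : R2) : ‖x‖ = √(x 0 ^ 2 + x 1 ^ 2) := by
  rw [EuclideanSpace.norm_eq]
  simp [Fin.sum_univ_two, sq_abs]

lemma apply_zero_le_norm (x : R2) : x 0 ≤ ‖x‖ := by
  rw [norm_R2_eq_sqrt]
  exact (le_abs_self _).trans (Real.abs_le_sqrt (le_add_of_nonneg_right (sq_nonneg _)))

lemma det_Rmat (θ : ℝ) : (Rmat θ).det = 1 := by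
  rw [Rmat, Matrix.det_fin_two_of]
  linear_combination cos_sq_add_sin_sq θ

lemma norm_mulV_Rmat (θ : ℝ) (y : R2) : ‖mulV (Rmat θ) y‖ = ‖y‖ := by
  simp only [norm_R2_eq_sqrt, mulV_apply_zero, mulV_apply_one, Rmat, Matrix.of_apply,
    Matrix.cons_val', Matrix.cons_val_zero, Matrix.cons_val_one, Matrix.empty_val',
    Matrix.cons_val_fin_one]
  congr 1
  linear_combination (y 0 ^ 2 + y 1 ^ 2) * sin_sq_add_cos_sq θ

lemma two_rpow_mul_le_two_pow {α : ℝ} (hα : α ≤ 1) (j : ℕ) : (2 : ℝ) ^ (α * j) ≤ 2 ^ j := by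
  rw [← Real.rpow_natCast]
  exact Real.rpow_le_rpow_of_exponent_le one_le_two (mul_le_of_le_one_left j.cast_nonneg hα)

section Box

variable {α β ε : ℝ} {j m ℓ : ℕ}

lemma natCast_mul_two_rpow_le (hm : (m : ℤ) ≤ mjmax α j) :
    (m : ℝ) * 2 ^ (α * j) ≤ 2 ^ j / 2 + 2 ^ (α * j) := by
  have hm' : (m : ℝ) ≤ 2 ^ ((1 - α) * j - 1) + 1 :=
    (Int.cast_le.mpr hm).trans (Int.ceil_lt_add_one _).le
  have hsplit : (2 : ℝ) ^ ((1 - α) * j - 1) * 2 ^ (α * j) = 2 ^ j / 2 := by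
    rw [← Real.rpow_add two_pos, ← Real.rpow_natCast, ← Real.rpow_sub_one two_ne_zero]
    ring_nf
  nlinarith [Real.rpow_nonneg zero_le_two (α * j)]

lemma mulV_Amat_add_cvec_apply_zero (q : R2) :
    (mulV (Amat α β j) q + cvec α j m) 0 = 2 ^ (α * j) * q 0 + (2 ^ j / 2 + m * 2 ^ (α * j)) := by
  simp [mulV_apply_zero, Amat, cvec, vec2, Real.rpow_sub_one, Real.rpow_natCast]

lemma mulV_Amat_add_cvec_apply_one (q : R2) :
    (mulV (Amat α β j) q + cvec α j m) 1 = 2 ^ (β * j) * q 1 := by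
  simp [mulV_apply_one, Amat, cvec, vec2]

lemma two_pow_le_four_mul_mulV_Amat_add_cvec_apply_zero (hα : α ≤ 1) (hε : ε ≤ 1 / 32)
    {q : R2} (hq : q ∈ baseQ ε) : (2 : ℝ) ^ j ≤ 4 * (mulV (Amat α β j) q + cvec α j m) 0 := by
  rw [mulV_Amat_add_cvec_apply_zero]
  have ha := two_rpow_mul_le_two_pow hα j
  have ha₀ := Real.rpow_nonneg zero_le_two (α * j)
  nlinarith [mul_le_mul_of_nonneg_left (show -(1 / 32) ≤ q 0 by linarith [hq.1.1]) ha₀,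
    mul_nonneg m.cast_nonneg ha₀]

lemma two_pow_le_four_mul_norm_of_mem_Qset (hα : α ≤ 1) (hε : ε ≤ 1 / 32) {x : R2}
    (hx : x ∈ Qset α β ε j m ℓ) : (2 : ℝ) ^ j ≤ 4 * ‖x‖ := by
  obtain ⟨q, hq, rfl⟩ := hx
  rw [norm_mulV_Rmat]
  exact (two_pow_le_four_mul_mulV_Amat_add_cvec_apply_zero hα hε hq).trans
    (mul_le_mul_of_nonneg_left (apply_zero_le_norm _) zero_le_four)

lemma norm_le_of_mem_Qset (hβα : β ≤ α) (hα : α ≤ 1) (hε : ε ≤ 1 / 32)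
    (hm : (m : ℤ) ≤ mjmax α j) {x : R2} (hx : x ∈ Qset α β ε j m ℓ) :
    ‖x‖ ≤ 4 * 2 ^ j := by
  obtain ⟨q, hq, rfl⟩ := hx
  have hy₀ :=
    two_pow_le_four_mul_mulV_Amat_add_cvec_apply_zero hα hε (β := β) (j := j) (m := m) hq
  obtain ⟨⟨-, hq₀⟩, hq₁, hq₁'⟩ := hq
  rw [norm_mulV_Rmat, norm_R2_eq_sqrt, Real.sqrt_le_iff]
  rw [mulV_Amat_add_cvec_apply_zero] at hy₀ ⊢
  rw [mulV_Amat_add_cvec_apply_one]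
  have ha := two_rpow_mul_le_two_pow hα j
  have hb := two_rpow_mul_le_two_pow (hβα.trans hα) j
  set P : ℝ := 2 ^ j
  have hP : 0 ≤ P := by positivity
  have ha₀ := Real.rpow_nonneg zero_le_two (α * j)
  have hb₀ := Real.rpow_nonneg zero_le_two (β * j)
  have hy₀' : 2 ^ (α * j) * q 0 + (P / 2 + m * 2 ^ (α * j)) ≤ 97 / 32 * P := by
    nlinarith [mul_le_mul_of_nonneg_left (show q 0 ≤ 33 / 32 by linarith) ha₀,
      natCast_mul_two_rpow_le hm]
  have hy₁ : |2 ^ (β * j) * q 1| ≤ P * (33 / 32) := by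
    rw [abs_mul, abs_of_nonneg hb₀]
    exact mul_le_mul hb (abs_le.mpr ⟨by linarith, by linarith⟩) (abs_nonneg _) hP
  refine ⟨by positivity, ?_⟩
  nlinarith [sq_le_sq' (abs_le.mp hy₁).1 (abs_le.mp hy₁).2]

end Box

def scale : Idx → ℕ
  | none => 0
  | some i => i.1

lemma wI_eq_two_rpow_scale (s : ℝ) (i : Idx) : wI s i = 2 ^ ((scale i : ℝ) * s) := by
  cases i <;> simp [wI, scale]

lemma norm_le_of_mem_QsetI {α β ε : ℝ} (hβα : β ≤ α) (hα : α ≤ 1) (hε : ε ≤ 1 / 32) {i : Idx}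
    (hi : memI α β i) {x : R2} (hx : x ∈ QsetI α β ε i) : ‖x‖ ≤ 4 * 2 ^ scale i := by
  cases i with
  | none =>
    simpa [scale] using (mem_ball_zero_iff.mp hx).le
  | some i =>
    obtain ⟨j, m, ℓ⟩ := i
    exact norm_le_of_mem_Qset hβα hα hε hi.2.1 hx

lemma scale_le_add_four {α β ε α' β' ε' : ℝ} (hα : α ≤ 1) (hε : ε ≤ 1 / 32)
    (hβα' : β' ≤ α') (hα' : α' ≤ 1) (hε' : ε' ≤ 1 / 32) {i i' : Idx} (hi' : memI α' β' i')
    {x : R2} (hx : x ∈ QsetI α β ε i) (hx' : x ∈ QsetI α' β' ε' i') :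
    scale i ≤ scale i' + 4 := by
  cases i with
  | none => exact Nat.zero_le _
  | some i =>
    obtain ⟨j, m, ℓ⟩ := i
    have h : (2 : ℝ) ^ j ≤ 2 ^ (scale i' + 4) :=
      calc (2 : ℝ) ^ j ≤ 4 * ‖x‖ := two_pow_le_four_mul_norm_of_mem_Qset hα hε hx
        _ ≤ 4 * (4 * 2 ^ scale i') := by
          gcongr; exact norm_le_of_mem_QsetI hβα' hα' hε' hi' hx'
        _ = 2 ^ (scale i' + 4) := by ring
    exact (pow_le_pow_iff_right₀ one_lt_two).mp h

lemma rpow_mul_le_rpow_mul_abs_mul_rpow_mul {b x y c : ℝ} (hb : 1 ≤ b) (h : |x - y| ≤ c)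
    (s : ℝ) : b ^ (x * s) ≤ b ^ (c * |s|) * b ^ (y * s) := by
  rw [← Real.rpow_add (by linarith)]
  refine Real.rpow_le_rpow_of_exponent_le hb ?_
  have : (x - y) * s ≤ c * |s| :=
    calc (x - y) * s ≤ |x - y| * |s| := abs_mul (x - y) s ▸ le_abs_self _
      _ ≤ c * |s| := mul_le_mul_of_nonneg_right h (abs_nonneg s)
  linarith

lemma wI_moderate {i i' : Idx} (h : scale i ≤ scale i' + 4) (h' : scale i' ≤ scale i + 4)
    (t : ℝ) : 2 ^ (-(4 * |t|)) * wI t i' ≤ wI t i ∧ wI t i ≤ 2 ^ (4 * |t|) * wI t i' := by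
  have hdist : |(scale i : ℝ) - scale i'| ≤ 4 := by
    rw [abs_sub_le_iff, sub_le_iff_le_add', sub_le_iff_le_add']
    exact ⟨mod_cast h, mod_cast h'⟩
  simp only [wI_eq_two_rpow_scale]
  constructor
  · rw [Real.rpow_neg zero_le_two, inv_mul_le_iff₀ (by positivity)]
    exact rpow_mul_le_rpow_mul_abs_mul_rpow_mul one_le_two ((abs_sub_comm _ _).trans_le hdist) t
  · exact rpow_mul_le_rpow_mul_abs_mul_rpow_mul one_le_two hdist t

lemma abs_det_Tmat (α β : ℝ) (i : Idx) : |(Tmat α β i).det| = wI (α + β) i := by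
  cases i with
  | none => simp [Tmat, wI]
  | some i =>
    obtain ⟨j, m, ℓ⟩ := i
    rw [Tmat, wI, Matrix.det_mul, det_Rmat, one_mul, Amat, Matrix.det_fin_two_of, mul_zero,
      sub_zero, ← Real.rpow_add two_pos, abs_of_pos (by positivity)]
    ring_nf

theorem wavePacket_relatively_moderate_general (α β ε α' β' ε' s : ℝ)
    (hβ0 : 0 ≤ β) (hβα : β ≤ α) (hα1 : α ≤ 1)
    (hβα' : β' ≤ α') (hα1' : α' ≤ 1)
    (hε : ε ∈ Set.Ioo (0:ℝ) (1/32)) (hε' : ε' ∈ Set.Ioo (0:ℝ) (1/32))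
    (i i' : Idx) (hi : memI α β i) (hi' : memI α' β' i')
    (h : (QsetI α β ε i ∩ QsetI α' β' ε' i').Nonempty) :
    ((2:ℝ) ^ (-(4 * |s|)) * wI s i' ≤ wI s i ∧ wI s i ≤ (2:ℝ) ^ (4 * |s|) * wI s i') ∧
    |(Tmat α β i).det| = wI (α + β) i ∧
    ((2:ℝ) ^ (-(4 * (α + β))) * wI (α + β) i' ≤ |(Tmat α β i).det| ∧
      |(Tmat α β i).det| ≤ (2:ℝ) ^ (4 * (α + β)) * wI (α + β) i') := by
  obtain ⟨x, hx, hx'⟩ := h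
  have hscale := scale_le_add_four hα1 hε.2.le hβα' hα1' hε'.2.le hi' hx hx'
  have hscale' := scale_le_add_four hα1' hε'.2.le hβα hα1 hε.2.le hi hx' hx
  have hdet := wI_moderate hscale hscale' (α + β)
  rw [abs_of_nonneg (by linarith : 0 ≤ α + β)] at hdet
  refine ⟨wI_moderate hscale hscale' s, abs_det_Tmat α β i, ?_⟩
  rwa [abs_det_Tmat]

/-- Relative moderateness of the weight `w^s` and of the covering
`Q^{(α,β)}` with respect to `Q^{(α',β')}`: if `i ∈ I^{(α,β)}`, `i' ∈ I^{(α',β')}` and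
`Q_i^{(α,β)} ∩ Q_{i'}^{(α',β')} ≠ ∅`, then `2^{−4|s|}·w_{i'}^s ≤ w_i^s ≤ 2^{4|s|}·w_{i'}^s`;
moreover `|det T_i^{(α,β)}| = w_i^{α+β}`, so that
`2^{−4(α+β)}·w_{i'}^{α+β} ≤ |det T_i^{(α,β)}| ≤ 2^{4(α+β)}·w_{i'}^{α+β}`. -/
theorem wavePacket_relatively_moderate (α β ε α' β' ε' s : ℝ)
    (hβ0 : 0 ≤ β) (hβα : β ≤ α) (hα1 : α ≤ 1)
    (hβ0' : 0 ≤ β') (hβα' : β' ≤ α') (hα1' : α' ≤ 1)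
    (hε : ε ∈ Set.Ioo (0:ℝ) (1/32)) (hε' : ε' ∈ Set.Ioo (0:ℝ) (1/32))
    (i i' : Idx) (hi : memI α β i) (hi' : memI α' β' i')
    (h : (QsetI α β ε i ∩ QsetI α' β' ε' i').Nonempty) :
    ((2:ℝ) ^ (-(4 * |s|)) * wI s i' ≤ wI s i ∧ wI s i ≤ (2:ℝ) ^ (4 * |s|) * wI s i') ∧
    |(Tmat α β i).det| = wI (α + β) i ∧
    ((2:ℝ) ^ (-(4 * (α + β))) * wI (α + β) i' ≤ |(Tmat α β i).det| ∧
      |(Tmat α β i).det| ≤ (2:ℝ) ^ (4 * (α + β)) * wI (α + β) i') :=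
  wavePacket_relatively_moderate_general α β ε α' β' ε' s hβ0 hβα hα1 hβα' hα1' hε hε' i i' hi hi' h
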